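/- arXiv:1709.03705 — 2 statements merged into one kernel-verified Lean document; each statement's English description precedes it below -/
import Mathlib

section
/- Let D be a finite set of real numbers containing at least one positive and at least one negative element, and give Ω = D^ℕ the product topology (D discrete). Then for each m ∈ ℕ, the set F_m = {(aₙ) ∈ Ω : sup_{x∈(0,1)} Σ_{n=1}^∞ aₙ xⁿ ≤ m} is nowhere dense in Ω; consequently the set {(aₙ) ∈ Ω : sup_{x∈(0,1)} Σ_{n=1}^∞ aₙ xⁿ < +∞} is of first category (meager) in Ω. -/
open Filter Topology Set

/-!
For fixed `x ∈ (0,1)` the sum `∑ aₙ xⁿ⁺¹` depends continuously on `a ∈ Ω`, since its terms are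
dominated by a geometric series uniformly in `a`; hence each `F_m` is closed. The sequences that
are eventually equal to a positive digit `d` are dense in `Ω`, and their power series tend to `+∞`
as `x → 1⁻`, so they lie outside every `F_m`. A closed set missing a dense set is nowhere dense, and
a sequence whose power series is bounded above lies in some `F_m`.
-/

theorem continuous_tsum_mul_pow {s : Set ℝ} (hs : Bornology.IsBounded s) {x : ℝ} (hx : |x| < 1) :
    Continuous fun a : ℕ → s => ∑' n, (a n : ℝ) * x ^ (n + 1) := by
  obtain ⟨C, hC⟩ := hs.exists_norm_le
  refine continuous_tsum (u := fun n => C * |x| ^ (n + 1))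
    (fun n => (continuous_subtype_val.comp (continuous_apply n)).mul continuous_const)
    (((summable_geometric_of_lt_one (abs_nonneg x) hx).mul_left |x|).mul_left C |>.congr
      fun n => by ring) fun n a => ?_
  rw [norm_mul, norm_pow, Real.norm_eq_abs]
  exact mul_le_mul_of_nonneg_right (hC _ (a n).2) (by positivity)

theorem tendsto_piecewise_lt_nhds {X : Type*} [TopologicalSpace X] (a : ℕ → X) (d : X) :
    Tendsto (fun N n => if n < N then a n else d) atTop (𝓝 a) :=
  tendsto_pi_nhds.2 fun n => tendsto_const_nhds.congr' <|
    (eventually_gt_atTop n).mono fun _ hN => (if_pos hN).symm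

theorem dense_setOf_eventually_eq {X : Type*} [TopologicalSpace X] (d : X) :
    Dense {b : ℕ → X | ∀ᶠ n in atTop, b n = d} := fun a =>
  mem_closure_of_tendsto (tendsto_piecewise_lt_nhds a d) <|
    Eventually.of_forall fun N => (eventually_ge_atTop N).mono fun _ hn => if_neg hn.not_gt

theorem tendsto_tsum_mul_pow_nhdsLT_one {b : ℕ → ℝ} {d : ℝ} (hd : 0 < d)
    (hb : ∀ᶠ n in atTop, b n = d) :
    Tendsto (fun x => ∑' n, b n * x ^ (n + 1)) (𝓝[<] 1) atTop := by
  obtain ⟨N, hN⟩ := eventually_atTop.1 hb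
  have hsplit : ∀ x ∈ Ioo (0 : ℝ) 1, ∑' n, b n * x ^ (n + 1) =
      ∑ n ∈ Finset.range N, b n * x ^ (n + 1) + d * x ^ (N + 1) * (1 - x)⁻¹ := by
    intro x hx
    have htail : ∀ n, b (n + N) * x ^ (n + N + 1) = d * x ^ (N + 1) * x ^ n := fun n => by
      rw [hN _ (by omega)]; ring
    have hgeom := summable_geometric_of_lt_one hx.1.le hx.2
    rw [← (summable_nat_add_iff N).1 ((hgeom.mul_left _).congr fun n => (htail n).symm)
      |>.sum_add_tsum_nat_add N, tsum_congr htail, tsum_mul_left,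
      tsum_geometric_of_lt_one hx.1.le hx.2]
  have hpoly : Tendsto (fun x : ℝ => ∑ n ∈ Finset.range N, b n * x ^ (n + 1)) (𝓝[<] 1)
      (𝓝 (∑ n ∈ Finset.range N, b n * 1 ^ (n + 1))) :=
    ((continuous_finsetSum _ fun n _ => by fun_prop).tendsto 1).mono_left nhdsWithin_le_nhds
  have hinv : Tendsto (fun x : ℝ => (1 - x)⁻¹) (𝓝[<] 1) atTop := by
    refine tendsto_inv_nhdsGT_zero.comp (tendsto_nhdsWithin_of_tendsto_nhds_of_eventually_within
      _ ?_ ?_)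
    · exact ((continuous_const.sub continuous_id).tendsto' 1 0 (sub_self 1)).mono_left
        nhdsWithin_le_nhds
    · exact eventually_nhdsWithin_of_forall fun x hx => mem_Ioi.2 (sub_pos.2 hx)
  have hpow : Tendsto (fun x : ℝ => d * x ^ (N + 1)) (𝓝[<] 1) (𝓝 d) := by
    simpa using ((by fun_prop : Continuous fun x : ℝ => d * x ^ (N + 1)).tendsto 1).mono_left
      nhdsWithin_le_nhds
  refine (hpoly.add_atTop (hpow.pos_mul_atTop hd hinv)).congr' ?_
  filter_upwards [Ioo_mem_nhdsLT zero_lt_one] with x hx using (hsplit x hx).symm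

theorem not_bddAbove_tsum_mul_pow {b : ℕ → ℝ} {d : ℝ} (hd : 0 < d)
    (hb : ∀ᶠ n in atTop, b n = d) :
    ¬ ∃ C : ℝ, ∀ x ∈ Ioo (0 : ℝ) 1, ∑' n, b n * x ^ (n + 1) ≤ C := by
  rintro ⟨C, hC⟩
  obtain ⟨x, hxC, hx⟩ := ((tendsto_tsum_mul_pow_nhdsLT_one hd hb).eventually_gt_atTop C).and
    (Ioo_mem_nhdsLT zero_lt_one) |>.exists
  exact (hC x hx).not_gt hxC

theorem isClosed_setOf_tsum_mul_pow_le {s : Set ℝ} (hs : Bornology.IsBounded s) (c : ℝ) :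
    IsClosed {a : ℕ → s | ∀ x ∈ Ioo (0 : ℝ) 1, ∑' n, (a n : ℝ) * x ^ (n + 1) ≤ c} := by
  simp only [ofPred_forall]
  exact isClosed_biInter fun x hx => isClosed_le
    (continuous_tsum_mul_pow hs (abs_lt.2 ⟨by linarith [hx.1], hx.2⟩)) continuous_const

theorem bounded_above_power_series_meager_general
    (D : Finset ℝ) (hpos : ∃ d ∈ D, 0 < d) :
    (∀ m : ℕ, IsNowhereDense
      {a : ℕ → D | ∀ x ∈ Set.Ioo (0 : ℝ) 1, ∑' n : ℕ, (a n : ℝ) * x ^ (n + 1) ≤ m}) ∧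
    IsMeagre
      {a : ℕ → D | ∃ C : ℝ, ∀ x ∈ Set.Ioo (0 : ℝ) 1, ∑' n : ℕ, (a n : ℝ) * x ^ (n + 1) ≤ C} := by
  obtain ⟨d, hdD, hd⟩ := hpos
  have hunbounded : ∀ a ∈ {b : ℕ → D | ∀ᶠ n in atTop, b n = ⟨d, hdD⟩},
      ¬ ∃ C : ℝ, ∀ x ∈ Ioo (0 : ℝ) 1, ∑' n, (a n : ℝ) * x ^ (n + 1) ≤ C := fun a ha =>
    not_bddAbove_tsum_mul_pow hd (ha.mono fun _ hn => congrArg Subtype.val hn)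
  have hF : ∀ m : ℕ, IsNowhereDense
      {a : ℕ → D | ∀ x ∈ Ioo (0 : ℝ) 1, ∑' n, (a n : ℝ) * x ^ (n + 1) ≤ m} := fun m =>
    (isClosed_setOf_tsum_mul_pow_le D.finite_toSet.isBounded m).isNowhereDense_iff.2 <|
      interior_eq_empty_iff_dense_compl.2 <|
        (dense_setOf_eventually_eq _).mono fun a ha hm => hunbounded a ha ⟨m, hm⟩
  refine ⟨hF, (isMeagre_iUnion fun m => (hF m).isMeagre).mono ?_⟩
  rintro a ⟨C, hC⟩
  exact mem_iUnion.2 ⟨⌈C⌉₊, fun x hx => (hC x hx).trans (Nat.le_ceil C)⟩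

/-- If the finite set `D` contains a positive and a negative element, then in `Ω = D^ℕ`
(product topology, `D` discrete) each set
`F_m = {(aₙ) : ∑ aₙ xⁿ ≤ m for all x ∈ (0,1)}` is nowhere dense; consequently the set of
sequences whose power series is bounded above on `(0,1)` is meager. -/
theorem bounded_above_power_series_meager
    (D : Finset ℝ) (hpos : ∃ d ∈ D, 0 < d) (hneg : ∃ d ∈ D, d < 0) :
    (∀ m : ℕ, IsNowhereDense
      {a : ℕ → D | ∀ x ∈ Set.Ioo (0 : ℝ) 1, ∑' n : ℕ, (a n : ℝ) * x ^ (n + 1) ≤ m}) ∧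
    IsMeagre
      {a : ℕ → D | ∃ C : ℝ, ∀ x ∈ Set.Ioo (0 : ℝ) 1, ∑' n : ℕ, (a n : ℝ) * x ^ (n + 1) ≤ C} :=
  bounded_above_power_series_meager_general D hpos
end

section
/- Let D = {d₁, …, d_k} be a finite set of k ≥ 2 distinct real numbers, and let p₁, …, p_k be positive real numbers with Σ_{j=1}^k p_j = 1. Let ℙ be the product probability measure on Ω = D^ℕ in which each coordinate independently takes the value d_j with probability p_j. If Σ_{j=1}^k p_j d_j > 0, then with ℙ-probability 1 the power series f(x) = Σ_{n=1}^∞ aₙ xⁿ satisfies lim_{x→1⁻} f(x) = +∞; if Σ_{j=1}^k p_j d_j < 0, then with ℙ-probability 1 it satisfies lim_{x→1⁻} f(x) = −∞. -/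
/-!
By the strong law of large numbers the partial sums `S N = a 0 + ⋯ + a (N - 1)` satisfy
`S N / N → m` almost surely, where `m = ∑ p_j d_j`. Abel summation gives
`∑ aₙ xⁿ⁺¹ = (1 - x) ∑ S N x^N`; since `S N ≥ (m / 2) N` for large `N` and
`(1 - x) ∑ N x^N = x / (1 - x)`, the series is at least `(m / 2) x / (1 - x)` minus a constant,
which tends to `+∞` as `x → 1⁻` when `m > 0`. The case `m < 0` follows by negating the coefficients.
-/

open MeasureTheory ProbabilityTheory Filter Topology Set ENNReal

open Finset

theorem hasSum_mul_pow_succ_of_hasSum_partialSum {R : Type*} [CommRing R] [TopologicalSpace R]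
    [IsTopologicalRing R] {a : ℕ → R} {x T : R}
    (h : HasSum (fun N => (∑ i ∈ range N, a i) * x ^ N) T) :
    HasSum (fun n => a n * x ^ (n + 1)) ((1 - x) * T) := by
  have hshift : HasSum (fun n => (∑ i ∈ range (n + 1), a i) * x ^ (n + 1)) T := by
    simpa using (hasSum_nat_add_iff' 1).2 h
  have hterm : (fun n => a n * x ^ (n + 1)) = fun n =>
      (∑ i ∈ range (n + 1), a i) * x ^ (n + 1) - x * ((∑ i ∈ range n, a i) * x ^ n) := by
    ext n
    rw [sum_range_succ]
    ring
  rw [hterm, sub_mul, one_mul]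
  exact hshift.sub (h.mul_left x)

theorem neg_sum_abs_le_tsum_mul_pow {e : ℕ → ℝ} {N₀ : ℕ} (he : ∀ N, N₀ ≤ N → 0 ≤ e N)
    {x : ℝ} (hx₀ : 0 ≤ x) (hx₁ : x ≤ 1) (hs : Summable fun N => e N * x ^ N) :
    -∑ N ∈ range N₀, |e N| ≤ ∑' N, e N * x ^ N := by
  calc -∑ N ∈ range N₀, |e N|
      ≤ ∑ N ∈ range N₀, e N * x ^ N := by
        rw [← sum_neg_distrib]
        refine sum_le_sum fun N _ => neg_le_of_abs_le ?_
        rw [abs_mul, abs_pow, abs_of_nonneg hx₀]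
        exact mul_le_of_le_one_right (abs_nonneg _) (pow_le_one₀ hx₀ hx₁)
    _ ≤ ∑' N, e N * x ^ N :=
        hs.sum_le_tsum _ fun N hN => mul_nonneg (he N (by simpa using hN)) (pow_nonneg hx₀ N)

theorem summable_mul_pow_of_tendsto_div {S : ℕ → ℝ} {m : ℝ}
    (hS : Tendsto (fun n : ℕ => S n / n) atTop (𝓝 m)) {x : ℝ} (hx : ‖x‖ < 1) :
    Summable fun N => S N * x ^ N := by
  have hlin : S =O[atTop] (fun n : ℕ => (n : ℝ)) := by
    refine (hS.isBigO_one ℝ).mul (Asymptotics.isBigO_refl (fun n : ℕ => (n : ℝ)) atTop)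
      |>.congr' ?_ (by simp)
    filter_upwards [eventually_ne_atTop 0] with n hn
    field_simp
  refine summable_of_isBigO_nat ?_ (hlin.mul (Asymptotics.isBigO_refl (x ^ ·) atTop))
  simpa using summable_pow_mul_geometric_of_norm_lt_one 1 hx

theorem tendsto_tsum_mul_pow_succ_atTop_of_tendsto_cesaro {a : ℕ → ℝ} {m : ℝ} (hm : 0 < m)
    (ha : Tendsto (fun n : ℕ => (∑ i ∈ range n, a i) / n) atTop (𝓝 m)) :
    Tendsto (fun x : ℝ => ∑' n, a n * x ^ (n + 1)) (𝓝[<] 1) atTop := by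
  set S : ℕ → ℝ := fun N => ∑ i ∈ range N, a i
  obtain ⟨N₀, hN₀⟩ : ∃ N₀, ∀ N, N₀ ≤ N → m / 2 * N ≤ S N := by
    refine ((ha.eventually (eventually_gt_nhds (half_lt_self hm))).and
      (eventually_gt_atTop 0)).exists_forall_of_atTop.imp fun N₀ h N hN => ?_
    obtain ⟨hlt, hpos⟩ := h N hN
    exact ((lt_div_iff₀ (by exact_mod_cast hpos)).1 hlt).le
  set B := ∑ N ∈ range N₀, |S N - m / 2 * N|
  have hbound : ∀ x ∈ Ioo (0 : ℝ) 1, m / 2 * (x / (1 - x)) - B ≤ ∑' n, a n * x ^ (n + 1) := by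
    rintro x ⟨hx₀, hx₁⟩
    have hx : ‖x‖ < 1 := by rw [Real.norm_eq_abs, abs_lt]; constructor <;> linarith
    have hS := (summable_mul_pow_of_tendsto_div ha hx).hasSum
    have hexcess : HasSum (fun N => (S N - m / 2 * N) * x ^ N)
        (∑' N, S N * x ^ N - m / 2 * (x / (1 - x) ^ 2)) :=
      (hS.sub ((hasSum_coe_mul_geometric_of_norm_lt_one hx).mul_left (m / 2))).congr_fun
        fun N => by ring
    have hlower : -B ≤ ∑' N, (S N - m / 2 * N) * x ^ N :=
      neg_sum_abs_le_tsum_mul_pow (fun N hN => sub_nonneg.2 (hN₀ N hN)) hx₀.le hx₁.le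
        hexcess.summable
    rw [hexcess.tsum_eq] at hlower
    rw [(hasSum_mul_pow_succ_of_hasSum_partialSum hS).tsum_eq]
    have h1x : 0 < 1 - x := by linarith
    have hB : 0 ≤ B := sum_nonneg fun _ _ => abs_nonneg _
    have hscale : m / 2 * (x / (1 - x)) = (1 - x) * (m / 2 * (x / (1 - x) ^ 2)) := by
      field_simp
    nlinarith [mul_le_mul_of_nonneg_left hlower h1x.le, mul_nonneg hx₀.le hB]
  have hlim : Tendsto (fun x : ℝ => m / 2 * (x / (1 - x)) - B) (𝓝[<] 1) atTop := by
    have hinv : Tendsto (fun x : ℝ => (1 - x)⁻¹) (𝓝[<] 1) atTop := by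
      refine tendsto_inv_nhdsGT_zero.comp (tendsto_nhdsWithin_iff.2 ⟨?_, ?_⟩)
      · exact ((continuous_const.sub continuous_id).tendsto' 1 0 (sub_self 1)).mono_left
          nhdsWithin_le_nhds
      · filter_upwards [self_mem_nhdsWithin] with x hx using sub_pos.2 (mem_Iio.1 hx)
    exact tendsto_atTop_add_const_right _ _ <| Tendsto.const_mul_atTop (half_pos hm) <|
      (tendsto_id.mono_left nhdsWithin_le_nhds).pos_mul_atTop one_pos hinv
  refine tendsto_atTop_mono' _ ?_ hlim
  filter_upwards [Ioo_mem_nhdsLT (zero_lt_one' ℝ)] with x hx using hbound x hx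

theorem tendsto_tsum_mul_pow_succ_atBot_of_tendsto_cesaro {a : ℕ → ℝ} {m : ℝ} (hm : m < 0)
    (ha : Tendsto (fun n : ℕ => (∑ i ∈ range n, a i) / n) atTop (𝓝 m)) :
    Tendsto (fun x : ℝ => ∑' n, a n * x ^ (n + 1)) (𝓝[<] 1) atBot := by
  have hneg := tendsto_tsum_mul_pow_succ_atTop_of_tendsto_cesaro (a := fun n => -a n)
    (neg_pos.2 hm) (by simpa [neg_div] using ha.neg)
  rw [← tendsto_neg_atTop_iff]
  simpa [neg_mul, tsum_neg] using hneg

theorem integrable_id_sum_smul_dirac {ι : Type*} [Fintype ι] (p d : ι → ℝ) :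
    Integrable id (∑ j, ENNReal.ofReal (p j) • Measure.dirac (d j)) :=
  integrable_finsetSum_measure.2 fun j _ =>
    (integrable_dirac (by simp)).smul_measure ofReal_ne_top

theorem integral_id_sum_smul_dirac {ι : Type*} [Fintype ι] {p : ι → ℝ} (hp : ∀ j, 0 ≤ p j)
    (d : ι → ℝ) : ∫ x, x ∂(∑ j, ENNReal.ofReal (p j) • Measure.dirac (d j)) = ∑ j, p j * d j := by
  rw [integral_finsetSum_measure fun j _ =>
    (integrable_dirac (by simp)).smul_measure ofReal_ne_top]
  refine sum_congr rfl fun j _ => ?_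
  rw [integral_smul_measure, integral_dirac, smul_eq_mul, toReal_ofReal (hp j)]

theorem random_power_series_nonzero_mean_nonuniform_general
(k : ℕ) (d : Fin k → ℝ)
    (p : Fin k → ℝ) (hp : ∀ j, 0 < p j)
    (P : Measure (ℕ → ℝ))
    (hindep : iIndepFun (fun n (a : ℕ → ℝ) => a n) P)
    (hdist : ∀ n : ℕ,
      P.map (fun a => a n) = ∑ j, ENNReal.ofReal (p j) • Measure.dirac (d j)) :
    ((0 < ∑ j, p j * d j) →
      ∀ᵐ a ∂P,
        Tendsto (fun x : ℝ => ∑' n : ℕ, a n * x ^ (n + 1)) (𝓝[<] (1 : ℝ)) atTop) ∧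
    ((∑ j, p j * d j < 0) →
      ∀ᵐ a ∂P,
        Tendsto (fun x : ℝ => ∑' n : ℕ, a n * x ^ (n + 1)) (𝓝[<] (1 : ℝ)) atBot) := by
  have hmeas : ∀ n, Measurable fun a : ℕ → ℝ => a n := measurable_pi_apply
  have hint : Integrable (fun a : ℕ → ℝ => a 0) P :=
    (integrable_map_measure measurable_id.aestronglyMeasurable (hmeas 0).aemeasurable).1
      (hdist 0 ▸ integrable_id_sum_smul_dirac p d)
  have hmean : ∫ a, a 0 ∂P = ∑ j, p j * d j := by
    rw [← integral_id_sum_smul_dirac (fun j => (hp j).le), ← hdist 0]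
    exact (integral_map (hmeas 0).aemeasurable aestronglyMeasurable_id).symm
  have hslln := strong_law_ae_real (fun n (a : ℕ → ℝ) => a n) hint
    (fun i j hij => hindep.indepFun hij)
    (fun i => ⟨(hmeas i).aemeasurable, (hmeas 0).aemeasurable, by rw [hdist i, hdist 0]⟩)
  rw [hmean] at hslln
  exact ⟨fun hm => hslln.mono fun a ha => tendsto_tsum_mul_pow_succ_atTop_of_tendsto_cesaro hm ha,
    fun hm => hslln.mono fun a ha => tendsto_tsum_mul_pow_succ_atBot_of_tendsto_cesaro hm ha⟩

/-- **Concluding remark (non-uniform version of Theorem 1).** Let `D = {d₁, …, d_k}` be a set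
of `k ≥ 2` distinct reals and `p₁, …, p_k > 0` probabilities summing to `1`, and let `P` be
the product measure whose coordinates are independent with `P(aₙ = d_j) = p_j`. If the
expected value `∑ p_j d_j` is positive, then almost surely `lim_{x→1⁻} ∑ aₙ xⁿ = +∞`;
if it is negative, then almost surely `lim_{x→1⁻} ∑ aₙ xⁿ = -∞`. -/
theorem random_power_series_nonzero_mean_nonuniform
(k : ℕ) (hk : 2 ≤ k) (d : Fin k → ℝ) (hd : Function.Injective d)
    (p : Fin k → ℝ) (hp : ∀ j, 0 < p j) (hpsum : ∑ j, p j = 1)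
    (P : Measure (ℕ → ℝ)) [IsProbabilityMeasure P]
    (hindep : iIndepFun (fun n (a : ℕ → ℝ) => a n) P)
    (hdist : ∀ n : ℕ,
      P.map (fun a => a n) = ∑ j, ENNReal.ofReal (p j) • Measure.dirac (d j)) :
    ((0 < ∑ j, p j * d j) →
      ∀ᵐ a ∂P,
        Tendsto (fun x : ℝ => ∑' n : ℕ, a n * x ^ (n + 1)) (𝓝[<] (1 : ℝ)) atTop) ∧
    ((∑ j, p j * d j < 0) →
      ∀ᵐ a ∂P,
        Tendsto (fun x : ℝ => ∑' n : ℕ, a n * x ^ (n + 1)) (𝓝[<] (1 : ℝ)) atBot) :=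
  random_power_series_nonzero_mean_nonuniform_general k d p hp P hindep hdist
end
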